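/- arXiv:2508.13449 — 3 statements merged into one kernel-verified Lean document; each statement's English description precedes it below -/
import Mathlib

section
/- For real b > 0 and real x > 0, ∫_0^∞ y^{-1/2} · e^{-x²/(4y)} · e^{-b y} dy = √(π/b) · e^{-x √b}. -/
open MeasureTheory Real

/-!
The substitution `y = u ^ 2` and completing the square (with `s = √b`, `c = x / 2`) turn the
integral into `2 e^{-x√b} ∫₀^∞ exp (-(s u - c / u) ^ 2) du`. By the Cauchy–Schlömilch
transformation this last integral is `√π / (2 s)`: `u ↦ s u - c / u` maps `(0, ∞)` bijectively
onto `ℝ` with Jacobian `s + c / u ^ 2`, and the involution `u ↦ c / (s u)`, which flips the sign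
of `s u - c / u`, shows that the parts `s du` and `c / u ^ 2 du` of the Jacobian contribute
equally.
-/

open Set

variable {E : Type*} [NormedAddCommGroup E] [NormedSpace ℝ E]

theorem integral_comp_div_Ioi {k : ℝ} (hk : 0 < k) (f : ℝ → E) :
    ∫ v in Ioi 0, (k / v ^ 2) • f (k / v) = ∫ u in Ioi 0, f u := by
  have hderiv : ∀ v ∈ Ioi (0 : ℝ), HasDerivWithinAt (fun v => k / v) (-(k / v ^ 2)) (Ioi 0) v :=
    fun v hv =>
      ((hasDerivAt_inv (ne_of_gt hv)).const_mul k).hasDerivWithinAt.congr_deriv (by ring)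
  have hinj : InjOn (fun v => k / v) (Ioi 0) := fun u _ v _ h => by
    simpa [div_div_cancel₀ hk.ne'] using congrArg (k / ·) h
  have himage : (fun v => k / v) '' Ioi 0 = Ioi 0 := by
    refine (image_subset_iff.2 fun v (hv : 0 < v) => div_pos hk hv).antisymm
      fun u (hu : 0 < u) => ⟨k / u, div_pos hk hu, div_div_cancel₀ hk.ne'⟩
  conv_rhs =>
    rw [← himage, integral_image_eq_integral_abs_deriv_smul measurableSet_Ioi hderiv hinj]
  refine setIntegral_congr_fun measurableSet_Ioi fun v (hv : 0 < v) => ?_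
  rw [abs_neg, abs_of_pos (by positivity)]

section CauchySchlomilch

variable {s c : ℝ}

theorem hasDerivAt_mul_sub_div (s c : ℝ) {u : ℝ} (hu : u ≠ 0) :
    HasDerivAt (fun u => s * u - c / u) (s + c / u ^ 2) u :=
  (((hasDerivAt_id' u).const_mul s).fun_sub ((hasDerivAt_inv hu).const_mul c)).congr_deriv
    (by ring)

theorem strictMonoOn_mul_sub_div (hs : 0 < s) (hc : 0 ≤ c) :
    StrictMonoOn (fun u => s * u - c / u) (Ioi 0) := by
  intro u hu v _ huv
  have : c / v ≤ c / u := div_le_div_of_nonneg_left hc hu huv.le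
  show s * u - c / u < s * v - c / v
  nlinarith

theorem image_mul_sub_div_Ioi (hs : 0 < s) (hc : 0 < c) :
    (fun u => s * u - c / u) '' Ioi 0 = univ := by
  refine eq_univ_of_forall fun t => ?_
  set r := √(t ^ 2 + 4 * s * c)
  have hr : r ^ 2 = t ^ 2 + 4 * s * c := sq_sqrt (by positivity)
  have htr : 0 < t + r := by
    have : |t| < r := by
      rw [← sqrt_sq_eq_abs]
      exact sqrt_lt_sqrt (sq_nonneg t) (by nlinarith)
    linarith [neg_abs_le t]
  -- the positive root of `s u ^ 2 - t u - c`
  refine ⟨(t + r) / (2 * s), div_pos htr (by positivity), ?_⟩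
  field_simp
  linear_combination hr

theorem integral_comp_mul_sub_div_Ioi (hs : 0 < s) (hc : 0 < c) (g : ℝ → E) :
    ∫ u in Ioi 0, (s + c / u ^ 2) • g (s * u - c / u) = ∫ t, g t := by
  have hderiv : ∀ u ∈ Ioi (0 : ℝ),
      HasDerivWithinAt (fun u => s * u - c / u) (s + c / u ^ 2) (Ioi 0) u :=
    fun u hu => (hasDerivAt_mul_sub_div s c (ne_of_gt hu)).hasDerivWithinAt
  conv_rhs => rw [← setIntegral_univ, ← image_mul_sub_div_Ioi hs hc,
    integral_image_eq_integral_abs_deriv_smul measurableSet_Ioi hderiv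
      (strictMonoOn_mul_sub_div hs hc.le).injOn]
  refine setIntegral_congr_fun measurableSet_Ioi fun u (hu : 0 < u) => ?_
  rw [abs_of_pos (by positivity)]

theorem integrableOn_Ioi_comp_mul_sub_div_iff (hs : 0 < s) (hc : 0 < c) (g : ℝ → E) :
    IntegrableOn (fun u => (s + c / u ^ 2) • g (s * u - c / u)) (Ioi 0) ↔ Integrable g := by
  have hderiv : ∀ u ∈ Ioi (0 : ℝ),
      HasDerivWithinAt (fun u => s * u - c / u) (s + c / u ^ 2) (Ioi 0) u :=
    fun u hu => (hasDerivAt_mul_sub_div s c (ne_of_gt hu)).hasDerivWithinAt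
  conv_rhs => rw [← integrableOn_univ, ← image_mul_sub_div_Ioi hs hc,
    integrableOn_image_iff_integrableOn_abs_deriv_smul measurableSet_Ioi hderiv
      (strictMonoOn_mul_sub_div hs hc.le).injOn]
  refine integrableOn_congr_fun (fun u (hu : 0 < u) => ?_) measurableSet_Ioi
  rw [abs_of_pos (by positivity)]

theorem integrableOn_Ioi_comp_mul_sub_div (hs : 0 < s) (hc : 0 < c) {g : ℝ → E}
    (hg : Integrable g) : IntegrableOn (fun u => g (s * u - c / u)) (Ioi 0) := by
  have hweight : ContinuousOn (fun u : ℝ => (s + c / u ^ 2)⁻¹) (Ioi 0) := fun u (hu : 0 < u) =>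
    (by fun_prop (disch := positivity) : ContinuousAt (fun u : ℝ => (s + c / u ^ 2)⁻¹) u)
      |>.continuousWithinAt
  have hbound : ∀ᵐ u ∂volume.restrict (Ioi 0), ‖(s + c / u ^ 2)⁻¹‖ ≤ s⁻¹ := by
    filter_upwards [ae_restrict_mem measurableSet_Ioi] with u (hu : 0 < u)
    rw [norm_inv, norm_of_nonneg (by positivity)]
    exact inv_anti₀ hs (le_add_of_nonneg_right (by positivity))
  have hweighted := (integrableOn_Ioi_comp_mul_sub_div_iff hs hc g).2 hg
  refine IntegrableOn.congr_fun (hweighted.bdd_smul s⁻¹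
    (hweight.aestronglyMeasurable measurableSet_Ioi) hbound) (fun u (hu : 0 < u) => ?_)
    measurableSet_Ioi
  rw [Pi.smul_apply', smul_smul, inv_mul_cancel₀ (by positivity), one_smul]

theorem integral_Ioi_comp_mul_sub_div_of_even (hs : 0 < s) (hc : 0 < c) {g : ℝ → E}
    (hg : Integrable g) (heven : ∀ t, g (-t) = g t) :
    ∫ u in Ioi 0, g (s * u - c / u) = (2 * s)⁻¹ • ∫ t, g t := by
  set I := ∫ u in Ioi 0, g (s * u - c / u)
  -- `u ↦ c / (s u)` swaps the two parts of `(s + c / u ^ 2) du` and flips the sign of `s u - c / u`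
  have hreflect : ∫ u in Ioi 0, (c / u ^ 2) • g (s * u - c / u) = s • I := by
    rw [← integral_smul, ← integral_comp_div_Ioi (div_pos hc hs)]
    refine setIntegral_congr_fun measurableSet_Ioi fun u (hu : 0 < u) => ?_
    have hflip : s * (c / s / u) - c / (c / s / u) = -(s * u - c / u) := by
      field_simp
      ring
    rw [hflip, heven, smul_smul]
    congr 1
    field_simp
  have hcomplement : ∫ u in Ioi 0, (c / u ^ 2) • g (s * u - c / u) = (∫ t, g t) - s • I := by
    have hsmul : IntegrableOn (fun u => s • g (s * u - c / u)) (Ioi 0) :=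
      (integrableOn_Ioi_comp_mul_sub_div hs hc hg).smul s
    rw [← integral_comp_mul_sub_div_Ioi hs hc g, ← integral_smul,
      ← integral_sub ((integrableOn_Ioi_comp_mul_sub_div_iff hs hc g).2 hg) hsmul]
    congr with u
    rw [add_smul, add_sub_cancel_left]
  rw [eq_inv_smul_iff₀ (by positivity), mul_smul, two_smul, ← eq_sub_iff_add_eq, ← hcomplement,
    hreflect]

theorem integral_Ioi_exp_neg_sq_mul_sub_div (hs : 0 < s) (hc : 0 < c) :
    ∫ u in Ioi 0, exp (-(s * u - c / u) ^ 2) = √π / (2 * s) := by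
  have hgauss := integral_gaussian 1
  simp only [neg_mul, one_mul, div_one] at hgauss
  rw [integral_Ioi_comp_mul_sub_div_of_even hs hc (g := fun t => exp (-t ^ 2))
    (by simpa using integrable_exp_neg_mul_sq one_pos) (fun t => by simp), hgauss,
    smul_eq_mul, inv_mul_eq_div]

end CauchySchlomilch

theorem gaussian_subordination (b x : ℝ) (hb : 0 < b) (hx : 0 < x) :
    ∫ y in Set.Ioi (0 : ℝ), y ^ (-(1 : ℝ) / 2) * Real.exp (-x ^ 2 / (4 * y)) * Real.exp (-b * y) =
      Real.sqrt (π / b) * Real.exp (-x * Real.sqrt b) := by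
  have hs : 0 < √b := sqrt_pos.2 hb
  have hintegrand : EqOn
      (fun u : ℝ => (2 * u ^ ((2 : ℝ) - 1)) • ((u ^ (2 : ℝ)) ^ (-(1 : ℝ) / 2) *
        exp (-x ^ 2 / (4 * u ^ (2 : ℝ))) * exp (-b * u ^ (2 : ℝ))))
      (fun u => 2 * exp (-x * √b) * exp (-(√b * u - x / 2 / u) ^ 2)) (Ioi 0) := by
    intro u (hu : 0 < u)
    have hpow : (u ^ (2 : ℝ)) ^ (-(1 : ℝ) / 2) = u⁻¹ := by
      rw [← rpow_mul hu.le]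
      norm_num [rpow_neg_one]
    have hsquare : -x ^ 2 / (4 * u ^ 2) + -b * u ^ 2 = -x * √b + -(√b * u - x / 2 / u) ^ 2 := by
      field_simp
      linear_combination 16 * u ^ 4 * sq_sqrt hb.le
    have hlin : u ^ ((2 : ℝ) - 1) = u := by norm_num
    dsimp only
    rw [smul_eq_mul, hlin, hpow, rpow_two, mul_assoc u⁻¹, ← exp_add, hsquare, exp_add]
    field_simp
  rw [← integral_comp_rpow_Ioi_of_pos two_pos, setIntegral_congr_fun measurableSet_Ioi hintegrand,
    integral_const_mul, integral_Ioi_exp_neg_sq_mul_sub_div hs (half_pos hx), sqrt_div' _ hb.le]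
  field_simp
end

section
/- For real a > 0 and real x, ∑_{n≥1} x^n a^{n-1} (−1)^n / (n! ζ(n+1)) = a^{-1} ∑_{n≥1} (μ(n)/n)(e^{-a x / n} − 1), where ζ is the Riemann zeta function and μ the Möbius function. -/
/-!
With `z = -a x`, the `n`-th term on the left is `a⁻¹ zⁿ / (n! ζ(n+1))`. Expanding
`1 / ζ(n+1) = ∑ₖ μ(k) / k^(n+1)` gives the double series `∑ₙ ∑ₖ μ(k) (z/k)ⁿ / (n! k)`, which is
absolutely summable (dominated by `|z|ⁿ/n! · 1/k²`); swapping the sums, the inner sum over `n`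
is `exp(z/k) - 1`.
-/

open ArithmeticFunction Complex
open scoped Nat ArithmeticFunction.Moebius

lemma exp_sub_one_eq_tsum_pnat (z : ℂ) :
    exp z - 1 = ∑' n : ℕ+, z ^ (n : ℕ) / (n : ℕ)! := by
  rw [exp_eq_exp_ℂ, ← (NormedSpace.expSeries_div_hasSum_exp z).tsum_eq,
    ← tsum_zero_pnat_eq_tsum_nat (NormedSpace.expSeries_div_summable z)]
  simp

lemma riemannZeta_inv_eq_tsum_moebius {s : ℂ} (hs : 1 < s.re) :
    (riemannZeta s)⁻¹ = ∑' k : ℕ+, (μ k : ℂ) / (k : ℂ) ^ s := by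
  rw [← LSeries_zeta_eq_riemannZeta hs,
    ← eq_inv_of_mul_eq_one_right (LSeries_zeta_mul_Lseries_moebius hs), LSeries,
    ← tsum_zero_pnat_eq_tsum_nat (LSeriesSummable_moebius_iff.mpr hs)]
  simp [LSeries.term_of_ne_zero]

lemma norm_moebius_div_pow_le (k : ℕ+) {m : ℕ} (hm : 2 ≤ m) :
    ‖(μ k : ℂ) / (k : ℂ) ^ m‖ ≤ 1 / (k : ℝ) ^ 2 := by
  have hk : (1 : ℝ) ≤ k := Nat.one_le_cast.mpr k.pos
  rw [norm_div, norm_pow, norm_intCast, Complex.norm_natCast]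
  gcongr
  exact_mod_cast abs_moebius_le_one

lemma summable_pow_div_factorial_mul_moebius_div_pow (z : ℂ) :
    Summable (Function.uncurry fun n k : ℕ+ =>
      z ^ (n : ℕ) / (n : ℕ)! * ((μ k : ℂ) / (k : ℂ) ^ ((n : ℕ) + 1))) := by
  have hexp : Summable fun n : ℕ+ => ‖z‖ ^ (n : ℕ) / (n : ℕ)! :=
    (Real.summable_pow_div_factorial ‖z‖).comp_injective PNat.coe_injective
  have hsq : Summable fun k : ℕ+ => 1 / (k : ℝ) ^ 2 :=
    ((Real.summable_one_div_nat_pow (p := 2)).mpr one_lt_two).comp_injective PNat.coe_injective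
  refine .of_norm_bounded (hexp.mul_of_nonneg hsq (fun _ => by positivity) fun _ => by positivity)
    fun ⟨n, k⟩ => ?_
  rw [Function.uncurry_apply_pair, norm_mul, norm_div, norm_pow, Complex.norm_natCast]
  exact mul_le_mul_of_nonneg_left (norm_moebius_div_pow_le k (Nat.succ_le_succ n.pos))
    (by positivity)

theorem tsum_pow_div_factorial_mul_riemannZeta (z : ℂ) :
    ∑' n : ℕ+, z ^ (n : ℕ) / ((n : ℕ)! * riemannZeta ((n : ℕ) + 1)) =
      ∑' k : ℕ+, (μ k : ℂ) / k * (exp (z / k) - 1) := by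
  have hrow (n : ℕ+) : z ^ (n : ℕ) / ((n : ℕ)! * riemannZeta ((n : ℕ) + 1)) =
      ∑' k : ℕ+, z ^ (n : ℕ) / (n : ℕ)! * ((μ k : ℂ) / (k : ℂ) ^ ((n : ℕ) + 1)) := by
    have hs : 1 < ((n : ℕ) + 1 : ℂ).re := by simp
    rw [tsum_mul_left, div_mul_eq_div_div, div_eq_mul_inv _ (riemannZeta _),
      riemannZeta_inv_eq_tsum_moebius hs]
    congr! 3 with k
    norm_cast
  have hcol (k : ℕ+) : (μ k : ℂ) / k * (exp (z / k) - 1) =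
      ∑' n : ℕ+, z ^ (n : ℕ) / (n : ℕ)! * ((μ k : ℂ) / (k : ℂ) ^ ((n : ℕ) + 1)) := by
    rw [exp_sub_one_eq_tsum_pnat, ← tsum_mul_left]
    have hk : (k : ℂ) ≠ 0 := by exact_mod_cast k.ne_zero
    refine tsum_congr fun n => ?_
    rw [div_pow, pow_succ]
    field_simp
  rw [tsum_congr hrow, tsum_congr hcol]
  exact (summable_pow_div_factorial_mul_moebius_div_pow z).tsum_comm.symm

theorem gram_riesz_series (a x : ℝ) (ha : 0 < a) :
    ∑' n : ℕ+, ((x : ℂ) ^ (n : ℕ) * (a : ℂ) ^ ((n : ℕ) - 1) * (-1) ^ (n : ℕ) /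
        ((Nat.factorial n : ℂ) * riemannZeta ((n : ℕ) + 1))) =
      (a : ℂ)⁻¹ * ∑' n : ℕ+, ((moebius (n : ℕ) : ℂ) / (n : ℂ)) *
        (Complex.exp (-(a : ℂ) * (x : ℂ) / (n : ℂ)) - 1) := by
  have ha0 : (a : ℂ) ≠ 0 := ofReal_ne_zero.mpr ha.ne'
  rw [← tsum_pow_div_factorial_mul_riemannZeta, ← tsum_mul_left]
  refine tsum_congr fun n => ?_
  rw [pow_sub₀ _ ha0 n.pos]
  ring
end

section
/- For real α > 0 and real y, ∫_0^∞ e^{-α x²} sin(y x) dx = (y / (2α)) · ₁F₁(1; 3/2; −y²/(4α)). -/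
open MeasureTheory Real

/-!
Expand `sin (y x)` in its Taylor series and integrate term by term against the Gaussian, which
is legitimate because the series of absolute integrals converges. The odd Gaussian moments are
`∫₀^∞ x^(2n+1) e^(-αx²) dx = n! / (2 α^(n+1))`, and `(3/2)_n · 4ⁿ n! = (2n+1)!` turns the resulting
series into the hypergeometric one.
-/

open Nat in
theorem prod_range_one_add_eq_factorial (n : ℕ) :
    ∏ i ∈ Finset.range n, ((1 : ℝ) + i) = n ! := by
  simp_rw [add_comm (1 : ℝ)]
  exact_mod_cast Finset.prod_range_add_one_eq_factorial n

open Nat in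
theorem prod_range_three_halves_add_mul_four_pow_mul_factorial (n : ℕ) :
    (∏ i ∈ Finset.range n, ((3 : ℝ) / 2 + i)) * (4 ^ n * n !) = (2 * n + 1)! := by
  induction n with
  | zero => simp
  | succ n ih =>
    rw [Finset.prod_range_succ, show 2 * (n + 1) + 1 = 2 * n + 1 + 1 + 1 by ring,
      factorial_succ, factorial_succ, factorial_succ]
    push_cast at ih ⊢
    linear_combination (4 * ((n : ℝ) + 1) * ((3 : ℝ) / 2 + n)) * ih

open Nat in
theorem factorial_mul_factorial_le_factorial_two_mul_add_one (n : ℕ) :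
    n ! * n ! ≤ (2 * n + 1)! :=
  calc n ! * n ! ≤ (n + n)! :=
        le_of_dvd (factorial_pos _) (factorial_mul_factorial_dvd_factorial_add n n)
    _ ≤ (2 * n + 1)! := factorial_le (by omega)

section GaussianMoments

variable {b : ℝ} (hb : 0 < b)
include hb

theorem integrableOn_pow_mul_exp_neg_mul_sq (k : ℕ) :
    IntegrableOn (fun x : ℝ => x ^ k * exp (-b * x ^ 2)) (Set.Ioi 0) := by
  simpa only [rpow_natCast] using
    integrableOn_rpow_mul_exp_neg_mul_sq hb (s := k) (by linarith [k.cast_nonneg (α := ℝ)])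

open Nat in
theorem integral_Ioi_odd_pow_mul_exp_neg_mul_sq (n : ℕ) :
    ∫ x in Set.Ioi (0 : ℝ), x ^ (2 * n + 1) * exp (-b * x ^ 2) = n ! / (2 * b ^ (n + 1)) := by
  have h := integral_rpow_mul_exp_neg_mul_rpow (p := 2) (q := ((2 * n + 1 : ℕ) : ℝ))
    two_pos (by linarith [(2 * n + 1 : ℕ).cast_nonneg (α := ℝ)]) hb
  have hexp : ((2 * n + 1 : ℕ) + 1 : ℝ) / 2 = (n + 1 : ℕ) := by push_cast; ring
  simp only [rpow_natCast, rpow_two, hexp, neg_div, rpow_neg hb.le] at h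
  rw [h, Nat.cast_succ, Gamma_nat_eq_factorial]
  field_simp

theorem summable_abs_pow_div_factorial_mul_gaussian_moment (y : ℝ) :
    Summable fun n : ℕ => |y| ^ (2 * n + 1) / (2 * n + 1).factorial *
      (n.factorial / (2 * b ^ (n + 1))) := by
  refine Summable.of_nonneg_of_le (fun n => by positivity) (fun n => ?_)
    ((summable_pow_div_factorial (y ^ 2 / b)).mul_left (|y| / (2 * b)))
  have hfac : (n.factorial : ℝ) * n.factorial ≤ (2 * n + 1).factorial := by
    exact_mod_cast factorial_mul_factorial_le_factorial_two_mul_add_one n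
  calc |y| ^ (2 * n + 1) / (2 * n + 1).factorial * (n.factorial / (2 * b ^ (n + 1)))
      ≤ |y| ^ (2 * n + 1) / (n.factorial * n.factorial) * (n.factorial / (2 * b ^ (n + 1))) := by
        gcongr
    _ = |y| / (2 * b) * ((y ^ 2 / b) ^ n / n.factorial) := by
        rw [pow_succ, pow_mul, sq_abs, div_pow]
        field_simp
        ring

theorem hasSum_integral_exp_neg_mul_sq_mul_sin (y : ℝ) :
    HasSum (fun n : ℕ => (-1) ^ n * y ^ (2 * n + 1) / (2 * n + 1).factorial *
        (n.factorial / (2 * b ^ (n + 1))))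
      (∫ x in Set.Ioi (0 : ℝ), exp (-b * x ^ 2) * sin (y * x)) := by
  set F : ℕ → ℝ → ℝ := fun n x => (-1) ^ n * y ^ (2 * n + 1) / (2 * n + 1).factorial *
    (x ^ (2 * n + 1) * exp (-b * x ^ 2))
  have hF_int (n : ℕ) : Integrable (F n) (volume.restrict (Set.Ioi 0)) :=
    (integrableOn_pow_mul_exp_neg_mul_sq hb _).const_mul _
  have hF_norm (n : ℕ) : ∫ x in Set.Ioi (0 : ℝ), ‖F n x‖ =
      |y| ^ (2 * n + 1) / (2 * n + 1).factorial * (n.factorial / (2 * b ^ (n + 1))) := by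
    rw [← integral_Ioi_odd_pow_mul_exp_neg_mul_sq hb, ← integral_const_mul]
    refine setIntegral_congr_fun measurableSet_Ioi fun x (hx : 0 < x) => ?_
    simp [F, abs_of_pos hx, abs_of_pos (exp_pos _)]
  have hF_hasSum : ∀ x, HasSum (F · x) (exp (-b * x ^ 2) * sin (y * x)) := fun x =>
    ((hasSum_sin (y * x)).mul_left (exp (-b * x ^ 2))).congr_fun fun n => by
      simp only [F, mul_pow]; ring
  have hInt := hasSum_integral_of_summable_integral_norm hF_int
    (by simpa only [hF_norm] using summable_abs_pow_div_factorial_mul_gaussian_moment hb y)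
  simp only [fun x => (hF_hasSum x).tsum_eq] at hInt
  refine hInt.congr_fun fun n => ?_
  simp only [F, integral_const_mul, integral_Ioi_odd_pow_mul_exp_neg_mul_sq hb]

end GaussianMoments

theorem sine_moment_term_eq_hypergeometric_term {α : ℝ} (hα : 0 < α) (y : ℝ) (n : ℕ) :
    (-1) ^ n * y ^ (2 * n + 1) / (2 * n + 1).factorial * (n.factorial / (2 * α ^ (n + 1))) =
      y / (2 * α) *
        ((∏ i ∈ Finset.range n, ((1 : ℝ) + i)) / (∏ i ∈ Finset.range n, ((3 : ℝ) / 2 + i)) *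
          (-y ^ 2 / (4 * α)) ^ n / n.factorial) := by
  have hP := prod_range_three_halves_add_mul_four_pow_mul_factorial n
  have hPpos : 0 < ∏ i ∈ Finset.range n, ((3 : ℝ) / 2 + i) :=
    Finset.prod_pos fun i _ => by positivity
  rw [prod_range_one_add_eq_factorial, ← hP, div_pow, mul_pow, neg_pow (y ^ 2), ← pow_mul]
  field_simp
  ring

theorem gaussian_sine_transform (α y : ℝ) (hα : 0 < α) :
    ∫ x in Set.Ioi (0 : ℝ), Real.exp (-α * x ^ 2) * Real.sin (y * x) =
      y / (2 * α) * ∑' n : ℕ,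
        ((∏ i ∈ Finset.range n, ((1 : ℝ) + i)) / (∏ i ∈ Finset.range n, ((3 : ℝ) / 2 + i))) *
          (-y ^ 2 / (4 * α)) ^ n / (Nat.factorial n : ℝ) := by
  rw [← (hasSum_integral_exp_neg_mul_sq_mul_sin hα y).tsum_eq, ← tsum_mul_left]
  exact tsum_congr (sine_moment_term_eq_hypergeometric_term hα y)
end
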